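/- Let (X, f) be a connectivity system with f({e}) ≤ k for every e ∈ X. If L is a linear tangle of order k+1 on (X, f), then the family S = { A ⊆ X : X \ A ∈ L } is a single ultrafilter of order k+1 on (X, f). -/

import Mathlib

open Finset

def SymmSubmodular {α : Type*} [Fintype α] [DecidableEq α] (f : Finset α → ℕ) : Prop :=
  (∀ A : Finset α, f A = f Aᶜ) ∧
  ∀ A B : Finset α, f (A ∩ B) + f (A ∪ B) ≤ f A + f B

def LinearTangle {α : Type*} [Fintype α] [DecidableEq α]
    (f : Finset α → ℕ) (k : ℕ) (L : Set (Finset α)) : Prop :=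
  (∀ A ∈ L, f A ≤ k) ∧
  (∅ : Finset α) ∈ L ∧
  (∀ A : Finset α, f A ≤ k → (A ∈ L ↔ Aᶜ ∉ L)) ∧
  ∀ A ∈ L, ∀ B ∈ L, ∀ e : α, f {e} ≤ k → A ∪ B ∪ {e} ≠ Finset.univ

def SingleFilter {α : Type*} [Fintype α] [DecidableEq α]
    (f : Finset α → ℕ) (k : ℕ) (S : Set (Finset α)) : Prop :=
  (∀ A ∈ S, ∀ e : α, f {e} ≤ k → f (A \ {e}) ≤ k → A \ {e} ∈ S) ∧
  (∀ A ∈ S, ∀ B : Finset α, A ⊆ B → f B ≤ k → B ∈ S) ∧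
  (∅ : Finset α) ∉ S

def SingleUltrafilter {α : Type*} [Fintype α] [DecidableEq α]
    (f : Finset α → ℕ) (k : ℕ) (S : Set (Finset α)) : Prop :=
  SingleFilter f k S ∧ ∀ A : Finset α, f A ≤ k → A ∈ S ∨ Aᶜ ∈ S


namespace LinearTangle

variable {α : Type*} [Fintype α] [DecidableEq α] {f : Finset α → ℕ} {k : ℕ} {L : Set (Finset α)}

theorem mem_or_compl_mem (hL : LinearTangle f k L) {A : Finset α} (hA : f A ≤ k) :
    A ∈ L ∨ Aᶜ ∈ L := by
  by_cases h : Aᶜ ∈ L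
  · exact .inr h
  · exact .inl ((hL.2.2.1 A hA).mpr h)

theorem univ_notMem (hL : LinearTangle f k L) : (univ : Finset α) ∉ L := fun h ↦
  (hL.2.2.1 univ (hL.1 univ h)).mp h (by simpa using hL.2.1)

theorem nonempty (hL : LinearTangle f k L) : Nonempty α := by
  by_contra h
  rw [not_nonempty_iff] at h
  exact hL.univ_notMem (by simpa [univ_eq_empty] using hL.2.1)

/-- Uniqueness in (L2) lets us add to `L` either `B` or its complement; `B` is excluded by (L3),
since together with `Aᶜ ∈ L` and `{e}` it would cover `X`. -/
theorem compl_mem_of_subset_union_singleton (hL : LinearTangle f k L) {A B : Finset α} {e : α}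
    (hA : Aᶜ ∈ L) (hB : f B ≤ k) (he : f {e} ≤ k) (hAB : A ⊆ B ∪ {e}) : Bᶜ ∈ L := by
  refine (hL.mem_or_compl_mem hB).resolve_left fun hBL ↦ hL.2.2.2 _ hA _ hBL e he ?_
  rw [union_assoc]
  exact eq_univ_of_forall fun x ↦ (em (x ∈ A)).elim (fun hx ↦ mem_union_right _ (hAB hx))
    (fun hx ↦ mem_union_left _ (mem_compl.mpr hx))

end LinearTangle

theorem stmt3_general {α : Type*} [Fintype α] [DecidableEq α] (f : Finset α → ℕ) (k : ℕ)
    (hsing : ∀ e : α, f {e} ≤ k)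
    (L : Set (Finset α)) (hL : LinearTangle f k L) :
    SingleUltrafilter f k {A : Finset α | Aᶜ ∈ L} := by
  refine ⟨⟨?_, ?_, ?_⟩, ?_⟩
  · intro A hA e he hAe
    exact hL.compl_mem_of_subset_union_singleton hA hAe he (by simp)
  · intro A hA B hAB hB
    obtain ⟨e⟩ := hL.nonempty
    exact hL.compl_mem_of_subset_union_singleton hA hB (hsing e) (hAB.trans subset_union_left)
  · simpa using hL.univ_notMem
  · intro A hA
    simpa [or_comm] using hL.mem_or_compl_mem hA

theorem stmt3 {α : Type*} [Fintype α] [DecidableEq α] (f : Finset α → ℕ) (k : ℕ)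
    (hf : SymmSubmodular f) (hsing : ∀ e : α, f {e} ≤ k)
    (L : Set (Finset α)) (hL : LinearTangle f k L) :
    SingleUltrafilter f k {A : Finset α | Aᶜ ∈ L} :=
  stmt3_general f k hsing L hL
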